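/- arXiv:2202.13978 — 2 statements merged into one kernel-verified Lean document; each statement's English description precedes it below -/
import Mathlib

section
/- For every integer n ≥ 1 and every real number θ with cos θ ≠ 0, the (2n)-th derivative of the secant function at θ equals sec θ · Σ_{j=0}^{n} (−1)^{n−j} (2j)! V(n,j) (1 + tan²θ)^j. -/
open Finset

/-- The central factorial numbers of odd indices `V(n,k)`, defined by the recurrence
`V(n,k) = V(n-1,k-1) + (2k+1)^2 * V(n-1,k)` with `V(0,0) = 1` and `V(0,k) = 0` for `k ≠ 0`. -/
def V : ℕ → ℕ → ℤ
  | 0, 0 => 1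
  | 0, _ + 1 => 0
  | n + 1, 0 => V n 0
  | n + 1, k + 1 => V n k + (2 * ((k : ℤ) + 1) + 1) ^ 2 * V n (k + 1)

lemma V_eq_zero : ∀ n k : ℕ, n < k → V n k = 0
  | 0, k + 1, _ => rfl
  | n + 1, k + 1, h => by
      rw [V, V_eq_zero n k (by omega), V_eq_zero n (k + 1) (by omega)]
      ring

/-- Signed coefficients. -/
noncomputable def C (n j : ℕ) : ℝ :=
  (-1 : ℝ) ^ (n - j) * ((2 * j).factorial : ℝ) * (V n j : ℝ)

lemma C_eq_zero {n j : ℕ} (h : n < j) : C n j = 0 := by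
  simp [C, V_eq_zero n j h]

lemma C_succ_zero (n : ℕ) : C (n + 1) 0 = -C n 0 := by
  simp only [C, Nat.sub_zero, show V (n + 1) 0 = V n 0 from rfl, pow_succ]
  ring

lemma C_succ_succ (n j : ℕ) :
    C (n + 1) (j + 1) =
      (2 * (j : ℝ) + 2) * (2 * j + 1) * C n j - (2 * j + 3) ^ 2 * C n (j + 1) := by
  have hV : V (n + 1) (j + 1) = V n j + (2 * ((j : ℤ) + 1) + 1) ^ 2 * V n (j + 1) := rfl
  have hfac : ((2 * (j + 1)).factorial : ℝ) =
      (2 * (j : ℝ) + 2) * (2 * j + 1) * ((2 * j).factorial : ℝ) := by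
    have : 2 * (j + 1) = (2 * j + 1) + 1 := by ring
    rw [this, Nat.factorial_succ, Nat.factorial_succ]
    push_cast
    ring
  have hsub : (n + 1) - (j + 1) = n - j := by omega
  rcases lt_or_ge j n with hj | hj
  · have hsub2 : n - j = (n - (j + 1)) + 1 := by omega
    simp only [C, hsub, hV, hfac, hsub2, pow_succ]
    push_cast
    ring
  · have hz : V n (j + 1) = 0 := V_eq_zero n (j + 1) (by omega)
    simp only [C, hsub, hV, hfac, hz]
    push_cast
    ring

/-- The key algebraic recurrence on sums. -/
lemma sum_step (n : ℕ) (s : ℝ) :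
    ∑ j ∈ Finset.range (n + 1),
        C n j * ((2 * (j : ℝ) + 1) * ((2 * j + 2) * s ^ (j + 1) - (2 * j + 1) * s ^ j))
      = ∑ j ∈ Finset.range (n + 2), C (n + 1) j * s ^ j := by
  rw [Finset.sum_range_succ' (fun j => C (n + 1) j * s ^ j) (n + 1)]
  have hL : ∀ j ∈ Finset.range (n + 1),
      C n j * ((2 * (j : ℝ) + 1) * ((2 * j + 2) * s ^ (j + 1) - (2 * j + 1) * s ^ j))
      = (2 * (j : ℝ) + 1) * (2 * j + 2) * C n j * s ^ (j + 1)
        - (2 * (j : ℝ) + 1) ^ 2 * (C n j * s ^ j) := fun j _ => by ring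
  rw [Finset.sum_congr rfl hL, Finset.sum_sub_distrib]
  have hR : ∀ j ∈ Finset.range (n + 1),
      C (n + 1) (j + 1) * s ^ (j + 1)
      = (2 * (j : ℝ) + 1) * (2 * j + 2) * C n j * s ^ (j + 1)
        - (2 * (j : ℝ) + 3) ^ 2 * (C n (j + 1) * s ^ (j + 1)) := fun j _ => by
    rw [C_succ_succ]; ring
  rw [Finset.sum_congr rfl hR, Finset.sum_sub_distrib, C_succ_zero]
  have h2 : ∑ j ∈ Finset.range (n + 1), (2 * (j : ℝ) + 1) ^ 2 * (C n j * s ^ j)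
      = (∑ j ∈ Finset.range n, (2 * ((j + 1 : ℕ) : ℝ) + 1) ^ 2 * (C n (j + 1) * s ^ (j + 1)))
        + (2 * ((0 : ℕ) : ℝ) + 1) ^ 2 * (C n 0 * s ^ 0) :=
    Finset.sum_range_succ' (fun j => (2 * (j : ℝ) + 1) ^ 2 * (C n j * s ^ j)) n
  rw [h2]
  have h3 : ∑ j ∈ Finset.range (n + 1), (2 * (j : ℝ) + 3) ^ 2 * (C n (j + 1) * s ^ (j + 1))
      = (∑ j ∈ Finset.range n, (2 * (j : ℝ) + 3) ^ 2 * (C n (j + 1) * s ^ (j + 1)))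
        + (2 * (n : ℝ) + 3) ^ 2 * (C n (n + 1) * s ^ (n + 1)) := Finset.sum_range_succ _ n
  rw [h3, C_eq_zero (Nat.lt_succ_self n)]
  have h4 : ∀ j ∈ Finset.range n,
      (2 * ((j + 1 : ℕ) : ℝ) + 1) ^ 2 * (C n (j + 1) * s ^ (j + 1))
      = (2 * (j : ℝ) + 3) ^ 2 * (C n (j + 1) * s ^ (j + 1)) := fun j _ => by push_cast; ring
  rw [Finset.sum_congr rfl h4]
  push_cast
  ring

open Real in
lemma one_add_tan_sq {x : ℝ} (h : Real.cos x ≠ 0) :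
    1 + Real.tan x ^ 2 = 1 / Real.cos x ^ 2 := by
  have h2 : Real.cos x ^ 2 ≠ 0 := pow_ne_zero 2 h
  rw [Real.tan_eq_sin_div_cos, div_pow, eq_div_iff h2, add_mul, one_mul,
    div_mul_cancel₀ _ h2, add_comm]
  exact Real.sin_sq_add_cos_sq x

lemma hasDerivAt_sec {x : ℝ} (h : Real.cos x ≠ 0) :
    HasDerivAt (fun x => (Real.cos x)⁻¹) (Real.tan x * (Real.cos x)⁻¹) x := by
  have := (Real.hasDerivAt_cos x).inv h
  refine this.congr_deriv (Eq.symm ?_)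
  rw [Real.tan_eq_sin_div_cos, neg_neg, sq, inv_eq_one_div, div_mul_div_comm, mul_one]

lemma hasDerivAt_S {x : ℝ} (h : Real.cos x ≠ 0) :
    HasDerivAt (fun x => 1 + Real.tan x ^ 2)
      (2 * Real.tan x * (1 + Real.tan x ^ 2)) x := by
  have ht := Real.hasDerivAt_tan h
  have := (hasDerivAt_const x (1 : ℝ)).add (ht.pow 2)
  refine this.congr_deriv (Eq.symm ?_)
  rw [one_add_tan_sq h]
  push_cast
  ring

lemma hasDerivAt_term {x : ℝ} (j : ℕ) (h : Real.cos x ≠ 0) :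
    HasDerivAt (fun x => (Real.cos x)⁻¹ * (1 + Real.tan x ^ 2) ^ j)
      ((2 * (j : ℝ) + 1) * (Real.tan x * ((Real.cos x)⁻¹ * (1 + Real.tan x ^ 2) ^ j))) x := by
  have hs := (hasDerivAt_S h).pow j
  have := (hasDerivAt_sec h).mul hs
  refine this.congr_deriv (Eq.symm ?_)
  set s := 1 + Real.tan x ^ 2 with hsdef
  have hkey : (j : ℝ) * s ^ (j - 1) * (2 * Real.tan x * s) = 2 * j * Real.tan x * s ^ j := by
    cases j with
    | zero => simp
    | succ m =>
      simp only [Nat.add_sub_cancel]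
      push_cast
      rw [pow_succ]
      ring
  rw [hkey]
  simp only [Pi.pow_apply, ← hsdef]
  ring

lemma hasDerivAt_term2 {x : ℝ} (j : ℕ) (h : Real.cos x ≠ 0) :
    HasDerivAt (fun x => Real.tan x * ((Real.cos x)⁻¹ * (1 + Real.tan x ^ 2) ^ j))
      ((Real.cos x)⁻¹ * ((2 * (j : ℝ) + 2) * (1 + Real.tan x ^ 2) ^ (j + 1)
        - (2 * (j : ℝ) + 1) * (1 + Real.tan x ^ 2) ^ j)) x := by
  have := (Real.hasDerivAt_tan h).mul (hasDerivAt_term j h)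
  refine this.congr_deriv (Eq.symm ?_)
  rw [← one_add_tan_sq h]
  set s := 1 + Real.tan x ^ 2 with hsdef
  have ht2 : Real.tan x ^ 2 = s - 1 := by rw [hsdef]; ring
  rw [pow_succ]
  calc (Real.cos x)⁻¹ * ((2 * (j : ℝ) + 2) * (s ^ j * s) - (2 * (j : ℝ) + 1) * s ^ j)
      = s * ((Real.cos x)⁻¹ * s ^ j)
        + (2 * (j : ℝ) + 1) * (Real.tan x ^ 2 * ((Real.cos x)⁻¹ * s ^ j)) := by
        rw [ht2]; ring
    _ = _ := by ring

/-- Derivative of `sec · (sum of powers of sec²)`. -/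
lemma hasDerivAt_sum1 (c : ℕ → ℝ) (N : ℕ) {x : ℝ} (h : Real.cos x ≠ 0) :
    HasDerivAt (fun x => (Real.cos x)⁻¹ * ∑ j ∈ Finset.range N, c j * (1 + Real.tan x ^ 2) ^ j)
      (∑ j ∈ Finset.range N,
        c j * ((2 * (j : ℝ) + 1) * (Real.tan x * ((Real.cos x)⁻¹ * (1 + Real.tan x ^ 2) ^ j)))) x := by
  have hfun : (fun x => (Real.cos x)⁻¹ * ∑ j ∈ Finset.range N, c j * (1 + Real.tan x ^ 2) ^ j)
      = fun x => ∑ j ∈ Finset.range N, c j * ((Real.cos x)⁻¹ * (1 + Real.tan x ^ 2) ^ j) := by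
    funext y
    rw [Finset.mul_sum]
    exact Finset.sum_congr rfl fun j _ => by ring
  rw [hfun]
  exact HasDerivAt.fun_sum fun j _ => (hasDerivAt_term j h).const_mul (c j)

lemma hasDerivAt_sum2 (c : ℕ → ℝ) (N : ℕ) {x : ℝ} (h : Real.cos x ≠ 0) :
    HasDerivAt (fun x => ∑ j ∈ Finset.range N,
        c j * ((2 * (j : ℝ) + 1) * (Real.tan x * ((Real.cos x)⁻¹ * (1 + Real.tan x ^ 2) ^ j))))
      ((Real.cos x)⁻¹ * ∑ j ∈ Finset.range N,
        c j * ((2 * (j : ℝ) + 1) * ((2 * (j : ℝ) + 2) * (1 + Real.tan x ^ 2) ^ (j + 1)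
          - (2 * (j : ℝ) + 1) * (1 + Real.tan x ^ 2) ^ j))) x := by
  have := HasDerivAt.fun_sum (u := Finset.range N)
    (fun j _ => ((hasDerivAt_term2 j h).const_mul ((2 * (j : ℝ) + 1))).const_mul (c j))
  refine this.congr_deriv (Eq.symm ?_)
  rw [Finset.mul_sum]
  exact Finset.sum_congr rfl fun j _ => by ring

lemma cos_ne_zero_eventually {θ : ℝ} (h : Real.cos θ ≠ 0) :
    ∀ᶠ x in nhds θ, Real.cos x ≠ 0 :=
  Real.continuous_cos.continuousAt.eventually_ne h

/-- Main induction. -/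
lemma key (n : ℕ) : ∀ θ : ℝ, Real.cos θ ≠ 0 →
    iteratedDeriv (2 * n) (fun x => (Real.cos x)⁻¹) θ =
      (Real.cos θ)⁻¹ * ∑ j ∈ Finset.range (n + 1), C n j * (1 + Real.tan θ ^ 2) ^ j := by
  induction n with
  | zero =>
    intro θ h
    simp [C, V, iteratedDeriv_zero]
  | succ n ih =>
    intro θ h
    have hev := cos_ne_zero_eventually h
    set f : ℝ → ℝ := fun x => (Real.cos x)⁻¹ with hf
    set g : ℝ → ℝ := fun x =>
      (Real.cos x)⁻¹ * ∑ j ∈ Finset.range (n + 1), C n j * (1 + Real.tan x ^ 2) ^ j with hg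
    set g1 : ℝ → ℝ := fun x => ∑ j ∈ Finset.range (n + 1),
      C n j * ((2 * (j : ℝ) + 1) * (Real.tan x * ((Real.cos x)⁻¹ * (1 + Real.tan x ^ 2) ^ j)))
      with hg1
    have e1 : iteratedDeriv (2 * n) f =ᶠ[nhds θ] g := hev.mono fun x hx => ih x hx
    have e2 : deriv (iteratedDeriv (2 * n) f) =ᶠ[nhds θ] deriv g := e1.deriv
    have e3 : deriv g =ᶠ[nhds θ] g1 :=
      hev.mono fun x hx => (hasDerivAt_sum1 (C n) (n + 1) hx).deriv
    have e4 : deriv (iteratedDeriv (2 * n) f) =ᶠ[nhds θ] g1 := e2.trans e3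
    have e5 : deriv (deriv (iteratedDeriv (2 * n) f)) θ = deriv g1 θ := e4.deriv.eq_of_nhds
    have hiter : iteratedDeriv (2 * (n + 1)) f θ
        = deriv (deriv (iteratedDeriv (2 * n) f)) θ := by
      have : 2 * (n + 1) = (2 * n + 1) + 1 := by ring
      rw [this, iteratedDeriv_succ, iteratedDeriv_succ]
    rw [hiter, e5, (hasDerivAt_sum2 (C n) (n + 1) h).deriv]
    rw [sum_step n (1 + Real.tan θ ^ 2)]

/-- For `n ≥ 1` and `cos θ ≠ 0`, the `(2n)`-th derivative of `sec` at `θ` equals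
`sec θ · Σ_{j=0}^n (-1)^{n-j} (2j)! V(n,j) (1 + tan² θ)^j`. -/
theorem stmt13 (n : ℕ) (hn : 1 ≤ n) (θ : ℝ) (h : Real.cos θ ≠ 0) :
    iteratedDeriv (2 * n) (fun x => (Real.cos x)⁻¹) θ =
      (Real.cos θ)⁻¹ *
        ∑ j ∈ Finset.range (n + 1),
          (-1 : ℝ) ^ (n - j) * ((2 * j).factorial : ℝ) * (V n j : ℝ) *
            (1 + Real.tan θ ^ 2) ^ j := by
  rw [key n θ h]
  rfl
end

section
/- For every integer n ≥ 1, the tangent number E_{2n−1}, i.e. the (2n−1)-st derivative of the function z ↦ tan z at z = 0, equals Σ_{j=1}^{n} (−4)^{n−j} (2j−1)! U(n,j). -/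
open Finset

/-- The central factorial numbers of even indices `U(n,k)`, defined by the recurrence
`U(n,k) = U(n-1,k-1) + k^2 * U(n-1,k)` with `U(1,1) = 1` and `U(1,k) = 0` for `k ≠ 1`. -/
def U : ℕ → ℕ → ℤ
  | 0, _ => 0
  | 1, k => if k = 1 then 1 else 0
  | _ + 2, 0 => 0
  | n + 2, k + 1 => U (n + 1) k + ((k : ℤ) + 1) ^ 2 * U (n + 1) (k + 1)

/-- `u = 1 + X^2`. -/
noncomputable def uu : Polynomial ℝ := 1 + Polynomial.X ^ 2

/-- Polynomials expressing derivatives of tan: `tan^{(m)} = P m (tan)`. -/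
noncomputable def P : ℕ → Polynomial ℝ
  | 0 => Polynomial.X
  | m + 1 => uu * (P m).derivative

/-- Coefficients of the closed form. -/
def c (n j : ℕ) : ℤ := (-4) ^ (n - j) * (2 * j - 1).factorial * U n j

lemma U_zero_right (n : ℕ) : U n 0 = 0 := by
  match n with
  | 0 => rfl
  | 1 => rfl
  | m + 2 => rfl

lemma U_eq_zero_of_lt : ∀ n k, n < k → U n k = 0 := by
  intro n
  induction n with
  | zero => intro k _; rfl
  | succ m ih =>
    intro k hk
    match m, k with
    | 0, k =>
      have : k ≠ 1 := by omega
      simp [U, this]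
    | m + 1, k + 1 =>
      have h1 : U (m + 1) k = 0 := ih k (by omega)
      have h2 : U (m + 1) (k + 1) = 0 := ih (k + 1) (by omega)
      show U (m + 1) k + ((k : ℤ) + 1) ^ 2 * U (m + 1) (k + 1) = 0
      rw [h1, h2]; ring

lemma fact_step (k : ℕ) (hk : 1 ≤ k) :
    ((2 * (k + 1) - 1).factorial : ℤ)
      = (2 * k + 1) * (2 * k) * ((2 * k - 1).factorial : ℤ) := by
  obtain ⟨j, rfl⟩ := Nat.exists_eq_add_of_le hk
  have h1 : 2 * (1 + j + 1) - 1 = (2 * j + 2) + 1 := by omega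
  have h2 : 2 * (1 + j) - 1 = 2 * j + 1 := by omega
  rw [h1, h2, Nat.factorial_succ, show (2 * j + 2) = (2 * j + 1) + 1 from rfl,
    Nat.factorial_succ]
  push_cast
  ring

lemma crec (n k : ℕ) (hn : 1 ≤ n) (hk : k ≤ n) :
    c (n + 1) (k + 1) =
      2 * k * (2 * k + 1) * c n k - (2 * k + 2) ^ 2 * c n (k + 1) := by
  obtain ⟨m, rfl⟩ : ∃ m, n = m + 1 := ⟨n - 1, by omega⟩
  simp only [c]
  have hU : U (m + 1 + 1) (k + 1) = U (m + 1) k + ((k : ℤ) + 1) ^ 2 * U (m + 1) (k + 1) := rfl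
  rw [hU]
  have hsub : m + 1 + 1 - (k + 1) = m + 1 - k := by omega
  rw [hsub]
  rcases Nat.lt_or_ge k (m + 1) with hlt | hge
  · have h4 : ((-4 : ℤ)) ^ (m + 1 - k) = -4 * (-4) ^ (m + 1 - (k + 1)) := by
      rw [show m + 1 - k = (m + 1 - (k + 1)) + 1 from by omega, pow_succ]
      ring
    rcases Nat.eq_zero_or_pos k with rfl | hk1
    · rw [U_zero_right]
      rw [h4]
      norm_num
      ring
    · rw [fact_step k hk1, h4]
      push_cast
      ring
  · have hke : k = m + 1 := by omega
    subst hke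
    have hz : U (m + 1) (m + 1 + 1) = 0 := U_eq_zero_of_lt _ _ (by omega)
    rw [hz]
    simp only [Nat.sub_self, show m + 1 - (m + 1 + 1) = 0 from by omega, pow_zero]
    rw [fact_step (m + 1) (by omega)]
    push_cast
    ring

lemma c_zero_right (n : ℕ) : c n 0 = 0 := by
  simp [c, U_zero_right]

lemma c_top (n : ℕ) : c n (n + 1) = 0 := by
  simp [c, U_eq_zero_of_lt n (n + 1) (by omega)]

lemma uu_deriv : uu.derivative = Polynomial.C 2 * Polynomial.X := by
  simp [uu]
  rw [← Polynomial.C_1, ← Polynomial.C_add]; norm_num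

lemma D1 (k : ℕ) : uu * (uu ^ (k + 1)).derivative
    = Polynomial.C (2 * ((k : ℝ) + 1)) * Polynomial.X * uu ^ (k + 1) := by
  rw [Polynomial.derivative_pow, uu_deriv, Nat.add_sub_cancel, pow_succ]
  push_cast
  simp only [map_add, map_mul, map_one, map_ofNat]
  ring

lemma tan_sq (x : ℝ) (hx : Real.cos x ≠ 0) :
    Real.tan x ^ 2 + 1 = 1 / Real.cos x ^ 2 := by
  rw [Real.tan_eq_sin_div_cos]
  have h := Real.sin_sq_add_cos_sq x
  field_simp
  exact h


lemma tan_iter (m : ℕ) :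
    deriv^[m] Real.tan =ᶠ[nhds (0 : ℝ)] fun x => (P m).eval (Real.tan x) := by
  induction m with
  | zero =>
    exact Filter.Eventually.of_forall fun x => by simp [P]
  | succ m ih =>
    rw [Function.iterate_succ_apply']
    refine ih.deriv.trans ?_
    have hopen : ∀ᶠ x in nhds (0 : ℝ), Real.cos x ≠ 0 :=
      Real.continuous_cos.continuousAt.eventually_ne (by simp)
    filter_upwards [hopen] with x hx
    have ht : HasDerivAt Real.tan (1 / Real.cos x ^ 2) x := Real.hasDerivAt_tan hx
    have hp : HasDerivAt (fun y => (P m).eval y) ((P m).derivative.eval (Real.tan x))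
        (Real.tan x) := (P m).hasDerivAt _
    have hc : HasDerivAt (fun x => (P m).eval (Real.tan x))
        ((P m).derivative.eval (Real.tan x) * (1 / Real.cos x ^ 2)) x := hp.comp x ht
    rw [hc.deriv]
    show _ = (uu * (P m).derivative).eval (Real.tan x)
    rw [Polynomial.eval_mul]
    have : uu.eval (Real.tan x) = 1 / Real.cos x ^ 2 := by
      have : uu.eval (Real.tan x) = Real.tan x ^ 2 + 1 := by simp [uu]; ring
      rw [this, tan_sq x hx]
    rw [this]; ring

/-- Key second-derivative computation: `D² u^{k+1}` where `D p = u p'`. -/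
lemma D2 (k : ℕ) :
    uu * (uu * (uu ^ (k + 1)).derivative).derivative =
      Polynomial.C ((2 * k + 2) * (2 * k + 3) : ℝ) * uu ^ (k + 2)
        - Polynomial.C (((2 * k + 2) : ℝ) ^ 2) * uu ^ (k + 1) := by
  rw [D1, Polynomial.derivative_mul, Polynomial.derivative_mul, Polynomial.derivative_C,
    Polynomial.derivative_X, Polynomial.derivative_pow, Nat.add_sub_cancel, uu_deriv]
  simp only [uu]
  push_cast
  simp only [map_add, map_mul, map_one, map_ofNat, map_pow]
  ring

lemma Dop_sum (s : Finset ℕ) (f : ℕ → Polynomial ℝ) :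
    uu * (∑ k ∈ s, f k).derivative = ∑ k ∈ s, uu * (f k).derivative := by
  rw [Polynomial.derivative_sum, Finset.mul_sum]

lemma Dop_C_mul (a : ℝ) (p : Polynomial ℝ) :
    uu * (Polynomial.C a * p).derivative = Polynomial.C a * (uu * p.derivative) := by
  rw [Polynomial.derivative_C_mul]; ring

lemma Pform : ∀ n, 1 ≤ n →
    P (2 * n - 1) = ∑ k ∈ Finset.range n, Polynomial.C ((c n (k + 1) : ℤ) : ℝ) * uu ^ (k + 1) := by
  intro n hn
  induction n with
  | zero => omega
  | succ m ih =>
    rcases Nat.eq_zero_or_pos m with rfl | hm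
    · have hP1 : P 1 = uu := by
        show uu * Polynomial.derivative Polynomial.X = uu
        simp
      have hc11 : c 1 1 = 1 := by decide
      norm_num [hP1, hc11]
    · have ih' := ih hm
      have hidx : 2 * (m + 1) - 1 = (2 * m - 1) + 2 := by omega
      rw [hidx]
      have hP : P ((2 * m - 1) + 2) = uu * (uu * (P (2 * m - 1)).derivative).derivative := rfl
      rw [hP, ih']
      simp only [Dop_sum, Dop_C_mul]
      simp only [D2]
      have hrhs : ∑ k ∈ Finset.range (m + 1),
            Polynomial.C ((c (m + 1) (k + 1) : ℤ) : ℝ) * uu ^ (k + 1)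
          = (∑ k ∈ Finset.range (m + 1),
              Polynomial.C ((2 * k * (2 * k + 1) * c m k : ℤ) : ℝ) * uu ^ (k + 1))
            - ∑ k ∈ Finset.range (m + 1),
              Polynomial.C (((2 * k + 2) ^ 2 * c m (k + 1) : ℤ) : ℝ) * uu ^ (k + 1) := by
        rw [← Finset.sum_sub_distrib]
        refine Finset.sum_congr rfl fun k hk => ?_
        rw [crec m k hm (Nat.lt_succ_iff.mp (Finset.mem_range.mp hk))]
        push_cast
        rw [map_sub]
        ring
      rw [hrhs]
      have h1 : ∑ k ∈ Finset.range (m + 1),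
            Polynomial.C ((2 * k * (2 * k + 1) * c m k : ℤ) : ℝ) * uu ^ (k + 1)
          = ∑ k ∈ Finset.range m,
            Polynomial.C ((2 * (k + 1) * (2 * (k + 1) + 1) * c m (k + 1) : ℤ) : ℝ) * uu ^ (k + 1 + 1) := by
        rw [Finset.sum_range_succ']
        simp [c_zero_right]
      have h2 : ∑ k ∈ Finset.range (m + 1),
            Polynomial.C (((2 * k + 2) ^ 2 * c m (k + 1) : ℤ) : ℝ) * uu ^ (k + 1)
          = ∑ k ∈ Finset.range m,
            Polynomial.C (((2 * k + 2) ^ 2 * c m (k + 1) : ℤ) : ℝ) * uu ^ (k + 1) := by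
        rw [Finset.sum_range_succ, c_top]
        simp
      rw [h1, h2, ← Finset.sum_sub_distrib]
      refine Finset.sum_congr rfl fun k hk => ?_
      push_cast
      simp only [map_mul, map_add, map_ofNat, map_one, map_pow, map_sub]
      ring

/-- For `n ≥ 1`, the tangent number `E_{2n-1}`, i.e. the `(2n-1)`-st derivative of
`tan` at `0`, equals `Σ_{j=1}^n (-4)^{n-j} (2j-1)! U(n,j)`. -/
theorem stmt15 (n : ℕ) (hn : 1 ≤ n) :
    iteratedDeriv (2 * n - 1) Real.tan 0 =
      ∑ j ∈ Finset.Icc 1 n, (-4 : ℝ) ^ (n - j) * ((2 * j - 1).factorial : ℝ) * (U n j : ℝ) := by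
  rw [iteratedDeriv_eq_iterate]
  rw [(tan_iter (2 * n - 1)).eq_of_nhds]
  rw [Real.tan_zero, Pform n hn]
  rw [Polynomial.eval_finset_sum]
  have hIcc : Finset.Icc 1 n = Finset.map ⟨fun k => k + 1, add_left_injective 1⟩ (Finset.range n) := by
    ext j
    simp only [Finset.mem_Icc, Finset.mem_map, Finset.mem_range, Function.Embedding.coeFn_mk]
    constructor
    · rintro ⟨h1, h2⟩; exact ⟨j - 1, by omega, by omega⟩
    · rintro ⟨a, ha, rfl⟩; omega
  rw [hIcc, Finset.sum_map]
  apply Finset.sum_congr rfl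
  intro k _
  have hu : (uu ^ (k + 1)).eval 0 = 1 := by simp [uu]
  simp only [Polynomial.eval_mul, Polynomial.eval_C, hu, mul_one, Function.Embedding.coeFn_mk]
  simp only [c]
  push_cast
  ring
end
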